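/- With identified sets M_μ = {p·μ^obs + (1−p)λ : λ ∈ Δ^K} and M_ν = {q·ν^obs + (1−q)λ' : λ' ∈ Δ^K}, the maximal discrepancy max over M_μ × M_ν of D(γ,η) satisfies max D ≥ D(p·μ^obs + (1−p)δ_1, q·ν^obs + (1−q)δ_K), the minimum satisfies min D ≤ D(μ*, ν*) for any specific feasible pair (μ*, ν*), and min D ≥ Σ_{k=1}^{K−1} max{0, p·F_{μ^obs}(k) − q·F_{ν^obs}(k) − (1−q), q·F_{ν^obs}(k) − p·F_{μ^obs}(k) − (1−p)}. -/
import Mathlib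


open Finset

/-- `μ` is a probability distribution on `{1,...,K}` (indexed by `Fin K`). -/
def IsDist {K : ℕ} (μ : Fin K → ℝ) : Prop :=
  (∀ i, 0 ≤ μ i) ∧ ∑ i, μ i = 1

/-- CDF of `μ` at threshold `k`: `F_μ(k) = ∑_{i ≤ k} μ_i`. -/
noncomputable def cdf {K : ℕ} (μ : Fin K → ℝ) (k : Fin K) : ℝ :=
  ∑ i ∈ Finset.univ.filter (fun i => i ≤ k), μ i

/-- Embedding of the first `K-1` thresholds into `Fin K`. -/
def emb {K : ℕ} (k : Fin (K - 1)) : Fin K :=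
  ⟨k.val, lt_of_lt_of_le k.isLt (Nat.sub_le K 1)⟩

/-- `D(μ,ν) = ∑_{k=1}^{K-1} |F_μ(k) - F_ν(k)|`. -/
noncomputable def Ddist {K : ℕ} (μ ν : Fin K → ℝ) : ℝ :=
  ∑ k : Fin (K - 1), |cdf μ (emb k) - cdf ν (emb k)|

/-- `π` is a coupling of `μ` and `ν`: nonnegative entries, row sums `μ`, column sums `ν`. -/
def IsCoupling {K : ℕ} (π : Fin K → Fin K → ℝ) (μ ν : Fin K → ℝ) : Prop :=
  (∀ i j, 0 ≤ π i j) ∧ (∀ i, ∑ j, π i j = μ i) ∧ (∀ j, ∑ i, π i j = ν j)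

/-- Transport cost `∑_{i,j} |i-j| π_{ij}`. -/
noncomputable def cost {K : ℕ} (π : Fin K → Fin K → ℝ) : ℝ :=
  ∑ i : Fin K, ∑ j : Fin K, |(i : ℝ) - (j : ℝ)| * π i j

/-- Identified set for response probability `p` and observed distribution `μobs`. -/
def Mset {K : ℕ} (p : ℝ) (μobs : Fin K → ℝ) : Set (Fin K → ℝ) :=
  {γ | IsDist γ ∧ ∀ k, p * μobs k ≤ γ k ∧ γ k ≤ p * μobs k + (1 - p)}

lemma cdf_nonneg' {K : ℕ} {μ : Fin K → ℝ} (h : ∀ i, 0 ≤ μ i) (k : Fin K) :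
    0 ≤ cdf μ k :=
  Finset.sum_nonneg fun i _ => h i

lemma cdf_le_one' {K : ℕ} {μ : Fin K → ℝ} (h : IsDist μ) (k : Fin K) :
    cdf μ k ≤ 1 := by
  rw [← h.2]
  exact Finset.sum_le_sum_of_subset_of_nonneg (Finset.filter_subset _ _)
    (fun i _ _ => h.1 i)

lemma cdf_lower {K : ℕ} {p : ℝ} {μobs γ : Fin K → ℝ}
    (hγ : γ ∈ Mset p μobs) (k : Fin K) :
    p * cdf μobs k ≤ cdf γ k := by
  rw [cdf, cdf, Finset.mul_sum]
  exact Finset.sum_le_sum fun i _ => (hγ.2 i).1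

lemma cdf_upper {K : ℕ} {p : ℝ} {μobs γ : Fin K → ℝ}
    (hμ : IsDist μobs) (hγ : γ ∈ Mset p μobs) (k : Fin K) :
    cdf γ k ≤ p * cdf μobs k + (1 - p) := by
  have h1 : cdf γ k + ∑ i ∈ Finset.univ.filter (fun i => ¬ i ≤ k), γ i = 1 := by
    rw [cdf, Finset.sum_filter_add_sum_filter_not]; exact hγ.1.2
  have h2 : cdf μobs k + ∑ i ∈ Finset.univ.filter (fun i => ¬ i ≤ k), μobs i = 1 := by
    rw [cdf, Finset.sum_filter_add_sum_filter_not]; exact hμ.2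
  have h3 : p * ∑ i ∈ Finset.univ.filter (fun i => ¬ i ≤ k), μobs i ≤
      ∑ i ∈ Finset.univ.filter (fun i => ¬ i ≤ k), γ i := by
    rw [Finset.mul_sum]
    exact Finset.sum_le_sum fun i _ => (hγ.2 i).1
  have h2' : ∑ i ∈ Finset.univ.filter (fun i => ¬ i ≤ k), μobs i = 1 - cdf μobs k := by
    linarith
  rw [h2'] at h3
  have : p * (1 - cdf μobs k) = p - p * cdf μobs k := by ring
  linarith

lemma mixture_mem {K : ℕ} {p : ℝ} {μobs : Fin K → ℝ} (hμ : IsDist μobs)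
    (hp : p ∈ Set.Icc (0 : ℝ) 1) (a : Fin K) :
    (fun i : Fin K => p * μobs i + (1 - p) * (if i = a then 1 else 0)) ∈ Mset p μobs := by
  obtain ⟨hp0, hp1⟩ := hp
  refine ⟨⟨fun i => ?_, ?_⟩, fun k => ⟨?_, ?_⟩⟩
  · dsimp only
    have : (0:ℝ) ≤ (if i = a then (1:ℝ) else 0) := by positivity
    nlinarith [hμ.1 i]
  · rw [Finset.sum_add_distrib, ← Finset.mul_sum, hμ.2, ← Finset.mul_sum]
    simp
  · dsimp only
    have : (0:ℝ) ≤ (if k = a then (1:ℝ) else 0) := by positivity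
    nlinarith
  · dsimp only
    have : (if k = a then (1:ℝ) else 0) ≤ 1 := by split <;> norm_num
    nlinarith

lemma Ddist_nonneg {K : ℕ} (μ ν : Fin K → ℝ) : 0 ≤ Ddist μ ν :=
  Finset.sum_nonneg fun _ _ => abs_nonneg _

/-- bounds on max and min of `D` over the identified sets: the max dominates
the value at the extreme mixtures with `δ_1` and `δ_K`; the min is dominated by any feasible
pair; and the min dominates the stated pointwise lower bound. -/
theorem stmt19 {K : ℕ} (hK : 1 ≤ K) (μobs νobs : Fin K → ℝ)
    (hμ : IsDist μobs) (hν : IsDist νobs)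
    (p q : ℝ) (hp : p ∈ Set.Icc (0 : ℝ) 1) (hq : q ∈ Set.Icc (0 : ℝ) 1) :
    (Ddist
        (fun i : Fin K => p * μobs i + (1 - p) * (if i = ⟨0, hK⟩ then 1 else 0))
        (fun i : Fin K => q * νobs i + (1 - q) * (if i = ⟨K - 1, by omega⟩ then 1 else 0)) ≤
      sSup {d : ℝ | ∃ γ ∈ Mset p μobs, ∃ η ∈ Mset q νobs, Ddist γ η = d}) ∧
    (∀ μstar ∈ Mset p μobs, ∀ νstar ∈ Mset q νobs,
      sInf {d : ℝ | ∃ γ ∈ Mset p μobs, ∃ η ∈ Mset q νobs, Ddist γ η = d} ≤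
        Ddist μstar νstar) ∧
    (∑ k : Fin (K - 1),
        max 0 (max (p * cdf μobs (emb k) - q * cdf νobs (emb k) - (1 - q))
                   (q * cdf νobs (emb k) - p * cdf μobs (emb k) - (1 - p))) ≤
      sInf {d : ℝ | ∃ γ ∈ Mset p μobs, ∃ η ∈ Mset q νobs, Ddist γ η = d}) := by
  set S : Set ℝ := {d : ℝ | ∃ γ ∈ Mset p μobs, ∃ η ∈ Mset q νobs, Ddist γ η = d} with hS
  have hγ1 := mixture_mem hμ hp (⟨0, hK⟩ : Fin K)
  have hηK := mixture_mem hν hq (⟨K - 1, by omega⟩ : Fin K)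
  have hne : S.Nonempty := ⟨_, _, hγ1, _, hηK, rfl⟩
  have hbddA : BddAbove S := by
    refine ⟨(K - 1 : ℕ), fun d hd => ?_⟩
    obtain ⟨γ, hγ, η, hη, rfl⟩ := hd
    calc Ddist γ η ≤ ∑ _k : Fin (K - 1), (1 : ℝ) := by
          refine Finset.sum_le_sum fun k _ => ?_
          have h1 := cdf_nonneg' hγ.1.1 (emb k)
          have h2 := cdf_le_one' hγ.1 (emb k)
          have h3 := cdf_nonneg' hη.1.1 (emb k)
          have h4 := cdf_le_one' hη.1 (emb k)
          rw [abs_le]; constructor <;> linarith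
      _ = (K - 1 : ℕ) := by simp
  have hbddB : BddBelow S := by
    refine ⟨0, fun d hd => ?_⟩
    obtain ⟨γ, _, η, _, rfl⟩ := hd
    exact Ddist_nonneg γ η
  refine ⟨le_csSup hbddA ⟨_, hγ1, _, hηK, rfl⟩, ?_, ?_⟩
  · intro μstar hμs νstar hνs
    exact csInf_le hbddB ⟨_, hμs, _, hνs, rfl⟩
  · refine le_csInf hne ?_
    rintro d ⟨γ, hγ, η, hη, rfl⟩
    refine Finset.sum_le_sum fun k _ => ?_
    have h1 := cdf_lower hγ (emb k)
    have h2 := cdf_upper hμ hγ (emb k)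
    have h3 := cdf_lower hη (emb k)
    have h4 := cdf_upper hν hη (emb k)
    have ha := abs_nonneg (cdf γ (emb k) - cdf η (emb k))
    have hb := le_abs_self (cdf γ (emb k) - cdf η (emb k))
    have hc := neg_abs_le (cdf γ (emb k) - cdf η (emb k))
    refine max_le ha (max_le ?_ ?_) <;> linarith
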